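/- arXiv:2106.15389 — 3 statements merged into one kernel-verified Lean document; each statement's English description precedes it below -/
import Mathlib

section
/- In the profit sharing graph associated with trades E, profits w, players N and incidence map B, there exists an s-t flow of value ∑_{e∈E} w e, and every s-t flow has value at most ∑_{e∈E} w e; consequently, the value of a maximum flow in the profit sharing graph equals ∑_{e∈E} w e, which equals v(N), the value of the grand coalition in the associated cooperative game. -/
open Finset

/-- Vertices of the profit sharing graph: source, sink, a node per trade, a node per player. -/
inductive PSV (E N : Type) where
  | src | snk | trade (e : E) | player (b : N)
  deriving DecidableEq, Fintype

/-- `f` is an `s`-`t` flow for capacities `u`: nonnegative, capacity-respecting,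
and flow is conserved at every vertex other than `s` and `t`. -/
def IsFlow {V : Type} [Fintype V] (s t : V) (u : V → V → ℝ) (f : V → V → ℝ) : Prop :=
  (∀ v w, 0 ≤ f v w) ∧ (∀ v w, f v w ≤ u v w) ∧
    ∀ v, v ≠ s → v ≠ t → (∑ w, f w v) = ∑ w, f v w

/-- The value of a flow: net outflow of the source `s`. -/
def flowValue {V : Type} [Fintype V] (s : V) (f : V → V → ℝ) : ℝ :=
  (∑ w, f s w) - ∑ w, f w s

/-- A maximum flow: a flow whose value is greatest among all `s`-`t` flows. -/
def IsMaxFlow {V : Type} [Fintype V] (s t : V) (u : V → V → ℝ) (f : V → V → ℝ) : Prop :=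
  IsFlow s t u f ∧ ∀ g, IsFlow s t u g → flowValue s g ≤ flowValue s f

/-- Capacities of the profit sharing graph for trades `E` with profits `w`,
players `N` and incidence map `B`. -/
noncomputable def psCap {E N : Type} [Fintype E] [DecidableEq N]
    (w : E → ℝ) (B : E → Finset N) : PSV E N → PSV E N → ℝ
  | .src, .trade e => w e
  | .trade e, .player b => if b ∈ B e then w e else 0
  | .player b, .snk => ∑ e ∈ Finset.univ.filter (fun e => b ∈ B e), w e
  | _, _ => 0

/-- Characteristic function of the associated cooperative game:
`v S` is the total profit of trades all of whose players lie in `S`. -/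
noncomputable def charFun {E N : Type} [Fintype E] [DecidableEq N]
    (w : E → ℝ) (B : E → Finset N) (S : Finset N) : ℝ :=
  ∑ e ∈ Finset.univ.filter (fun e => B e ⊆ S), w e

def psEquiv (E N : Type) : (Unit ⊕ Unit ⊕ E ⊕ N) ≃ PSV E N where
  toFun := fun x => match x with
    | .inl _ => .src
    | .inr (.inl _) => .snk
    | .inr (.inr (.inl e)) => .trade e
    | .inr (.inr (.inr b)) => .player b
  invFun := fun v => match v with
    | .src => .inl ()
    | .snk => .inr (.inl ())
    | .trade e => .inr (.inr (.inl e))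
    | .player b => .inr (.inr (.inr b))
  left_inv := by rintro (_ | _ | _ | _) <;> rfl
  right_inv := by rintro (_ | _ | _ | _) <;> rfl

lemma PSV.sum_univ {E N : Type} [Fintype E] [Fintype N] (g : PSV E N → ℝ) :
    ∑ v, g v = g .src + g .snk + (∑ e, g (.trade e)) + ∑ b, g (.player b) := by
  rw [← (psEquiv E N).sum_comp g]
  simp [psEquiv, Fintype.sum_sum_type, add_assoc]

/-- In the profit sharing graph there is a flow of value `∑ e, w e`, every flow has value
at most `∑ e, w e`, hence every maximum flow has value `∑ e, w e = v(N)`. -/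
theorem maxFlowValue_profitSharingGraph {E N : Type} [Fintype E] [Fintype N]
    [DecidableEq E] [DecidableEq N]
    (w : E → ℝ) (hw : ∀ e, 0 ≤ w e) (B : E → Finset N) (hB : ∀ e, B e ≠ ∅) :
    (∃ f : PSV E N → PSV E N → ℝ,
        IsFlow PSV.src PSV.snk (psCap w B) f ∧ flowValue PSV.src f = ∑ e, w e) ∧
      (∀ f : PSV E N → PSV E N → ℝ,
        IsFlow PSV.src PSV.snk (psCap w B) f → flowValue PSV.src f ≤ ∑ e, w e) ∧
      (∀ f : PSV E N → PSV E N → ℝ,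
        IsMaxFlow PSV.src PSV.snk (psCap w B) f →
          flowValue PSV.src f = ∑ e, w e ∧
            flowValue PSV.src f = charFun w B Finset.univ) := by
  classical
  have hBne : ∀ e, (B e).Nonempty := fun e => Finset.nonempty_iff_ne_empty.2 (hB e)
  set c : E → N := fun e => (hBne e).choose with hcdef
  have hc : ∀ e, c e ∈ B e := fun e => (hBne e).choose_spec
  -- the canonical flow
  set f : PSV E N → PSV E N → ℝ := fun v v' => match v, v' with
    | .src, .trade e => w e
    | .trade e, .player b => if c e = b then w e else 0
    | .player b, .snk => ∑ e ∈ Finset.univ.filter (fun e => c e = b), w e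
    | _, _ => 0 with hfdef
  have hf : IsFlow PSV.src PSV.snk (psCap w B) f := by
    refine ⟨?_, ?_, ?_⟩
    · rintro (_ | _ | e | b) (_ | _ | e' | b') <;>
        simp only [hfdef] <;>
        first
          | exact le_refl 0
          | exact hw _
          | (split <;> [exact hw _; exact le_refl 0])
          | exact Finset.sum_nonneg fun e _ => hw e
    · rintro (_ | _ | e | b) (_ | _ | e' | b') <;>
        simp only [hfdef, psCap] <;>
        try exact le_refl _
      · split
        · next h => simp [← h, hc e]
        · split <;> [exact hw _; exact le_refl 0]
      · refine Finset.sum_le_sum_of_subset_of_nonneg ?_ (fun e _ _ => hw e)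
        intro e he
        simp only [Finset.mem_filter, Finset.mem_univ, true_and] at *
        exact he ▸ hc e
    · rintro (_ | _ | e | b) hs ht
      · exact absurd rfl hs
      · exact absurd rfl ht
      · rw [PSV.sum_univ, PSV.sum_univ]
        simp [hfdef, Finset.sum_ite_eq]
      · rw [PSV.sum_univ, PSV.sum_univ]
        simp [hfdef, Finset.sum_ite_eq, Finset.sum_filter]
  have hval : flowValue PSV.src f = ∑ e, w e := by
    unfold flowValue
    rw [PSV.sum_univ, PSV.sum_univ]
    simp [hfdef]
  have hub : ∀ g : PSV E N → PSV E N → ℝ,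
      IsFlow PSV.src PSV.snk (psCap w B) g → flowValue PSV.src g ≤ ∑ e, w e := by
    intro g hg
    obtain ⟨h0, hcap, _⟩ := hg
    have h1 : flowValue PSV.src g ≤ ∑ v, g PSV.src v := by
      unfold flowValue
      have : 0 ≤ ∑ v, g v PSV.src := Finset.sum_nonneg fun v _ => h0 v _
      linarith
    refine h1.trans ?_
    calc ∑ v, g PSV.src v ≤ ∑ v, psCap w B PSV.src v :=
          Finset.sum_le_sum fun v _ => hcap _ v
      _ = ∑ e, w e := by rw [PSV.sum_univ]; simp [psCap]
  refine ⟨⟨f, hf, hval⟩, hub, ?_⟩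
  intro g ⟨hg, hmax⟩
  have h1 : flowValue PSV.src g = ∑ e, w e :=
    le_antisymm (hub g hg) (hval ▸ hmax f hf)
  refine ⟨h1, h1.trans ?_⟩
  unfold charFun
  simp
end

section
/- Theorem (Core Elements): Let f be a maximum flow in the profit sharing graph associated with trades E, profits w, players N and incidence map B, and define the payment to player b as p_b = f(b, t). Then p satisfies individual rationality (p_b ≥ 0 for all b ∈ N), coalitional rationality (∑_{b∈S} p_b ≥ v(S) for every S ⊆ N), and budget balance (∑_{b∈N} p_b ≤ v(N)). -/
open Finset

/-- Auxiliary equivalence used to split sums over the vertex type. -/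
def psvEquiv (E N : Type) : (Unit ⊕ Unit) ⊕ (E ⊕ N) ≃ PSV E N where
  toFun x := match x with
    | .inl (.inl _) => .src
    | .inl (.inr _) => .snk
    | .inr (.inl e) => .trade e
    | .inr (.inr b) => .player b
  invFun v := match v with
    | .src => .inl (.inl ())
    | .snk => .inl (.inr ())
    | .trade e => .inr (.inl e)
    | .player b => .inr (.inr b)
  left_inv x := by rcases x with (⟨⟩|⟨⟩)|(e|b) <;> rfl
  right_inv v := by cases v <;> rfl

lemma psv_sum {E N : Type} [Fintype E] [Fintype N] (F : PSV E N → ℝ) :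
    ∑ v, F v = F .src + F .snk + (∑ e, F (.trade e)) + ∑ b, F (.player b) := by
  rw [← (psvEquiv E N).sum_comp F]
  rw [Fintype.sum_sum_type, Fintype.sum_sum_type]
  simp [psvEquiv]
  ring

/-- An explicit flow saturating all source edges: route each trade's full profit
to a chosen player `c e`. -/
noncomputable def psFlow {E N : Type} [Fintype E] [DecidableEq E] [DecidableEq N]
    (w : E → ℝ) (c : E → N) : PSV E N → PSV E N → ℝ
  | .src, .trade e => w e
  | .trade e, .player b => if c e = b then w e else 0
  | .player b, .snk => ∑ e ∈ Finset.univ.filter (fun e => c e = b), w e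
  | _, _ => 0

lemma psFlow_isFlow {E N : Type} [Fintype E] [Fintype N] [DecidableEq E] [DecidableEq N]
    (w : E → ℝ) (hw : ∀ e, 0 ≤ w e) (B : E → Finset N) (c : E → N) (hc : ∀ e, c e ∈ B e) :
    IsFlow PSV.src PSV.snk (psCap w B) (psFlow w c) := by
  refine ⟨?_, ?_, ?_⟩
  · intro v v'
    cases v <;> cases v'
    case src.trade e => exact hw e
    case trade.player e b =>
      show (0:ℝ) ≤ if c e = b then w e else 0
      split <;> [exact hw _; exact le_rfl]
    case player.snk b =>
      exact Finset.sum_nonneg fun e _ => hw e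
    all_goals exact le_rfl
  · intro v v'
    cases v <;> cases v'
    case trade.player e b =>
      show (if c e = b then w e else 0) ≤ if b ∈ B e then w e else 0
      split
      · next h => rw [if_pos (h ▸ hc e)]
      · split <;> [exact hw _; exact le_rfl]
    case player.snk b =>
      show ∑ e ∈ univ.filter (fun e => c e = b), w e ≤
        ∑ e ∈ univ.filter (fun e => b ∈ B e), w e
      refine Finset.sum_le_sum_of_subset_of_nonneg ?_ fun e _ _ => hw e
      intro e he
      simp only [mem_filter, mem_univ, true_and] at he ⊢
      rw [← he]; exact hc e
    all_goals exact le_rfl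
  · intro v hv1 hv2
    cases v with
    | src => exact absurd rfl hv1
    | snk => exact absurd rfl hv2
    | trade e =>
      rw [psv_sum, psv_sum]
      simp [psFlow, Finset.sum_ite_eq]
    | player b =>
      rw [psv_sum, psv_sum]
      simp [psFlow, Finset.sum_ite_eq, Finset.sum_filter]

lemma psFlow_value {E N : Type} [Fintype E] [Fintype N] [DecidableEq E] [DecidableEq N]
    (w : E → ℝ) (c : E → N) :
    flowValue PSV.src (psFlow w c) = ∑ e, w e := by
  unfold flowValue
  rw [psv_sum, psv_sum]
  simp [psFlow]

/-- Core Elements: the payments `p b = f (player b) snk` induced by a maximum flow `f` in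
the profit sharing graph fulfill individual rationality, coalitional rationality,
and budget balance. -/
theorem coreElements_of_maxFlow {E N : Type} [Fintype E] [Fintype N]
    [DecidableEq E] [DecidableEq N]
    (w : E → ℝ) (hw : ∀ e, 0 ≤ w e) (B : E → Finset N) (hB : ∀ e, B e ≠ ∅)
    (f : PSV E N → PSV E N → ℝ)
    (hf : IsMaxFlow PSV.src PSV.snk (psCap w B) f) :
    (∀ b : N, 0 ≤ f (PSV.player b) PSV.snk) ∧
      (∀ S : Finset N, charFun w B S ≤ ∑ b ∈ S, f (PSV.player b) PSV.snk) ∧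
      (∑ b : N, f (PSV.player b) PSV.snk ≤ charFun w B Finset.univ) := by
  obtain ⟨⟨hf0, hfc, hcons⟩, hmax⟩ := hf
  -- flow vanishes on zero-capacity edges
  have hz : ∀ v v', psCap w B v v' = 0 → f v v' = 0 := fun v v' h =>
    le_antisymm (h ▸ hfc v v') (hf0 v v')
  have hz_player : ∀ e b, b ∉ B e → f (.trade e) (.player b) = 0 := by
    intro e b hb
    exact hz _ _ (by show (if b ∈ B e then w e else 0) = 0; rw [if_neg hb])
  -- conservation at a trade vertex
  have key_trade : ∀ e, f .src (.trade e) = ∑ b, f (.trade e) (.player b) := by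
    intro e
    have h := hcons (.trade e) (by simp) (by simp)
    rw [psv_sum, psv_sum] at h
    rw [hz .snk (.trade e) rfl, hz (.trade e) .src rfl, hz (.trade e) .snk rfl,
      Finset.sum_eq_zero (fun e' (_ : e' ∈ univ) => hz (.trade e') (.trade e) rfl),
      Finset.sum_eq_zero (fun b (_ : b ∈ univ) => hz (.player b) (.trade e) rfl),
      Finset.sum_eq_zero (fun e' (_ : e' ∈ univ) => hz (.trade e) (.trade e') rfl)] at h
    linarith
  -- conservation at a player vertex
  have key_player : ∀ b, (∑ e, f (.trade e) (.player b)) = f (.player b) .snk := by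
    intro b
    have h := hcons (.player b) (by simp) (by simp)
    rw [psv_sum, psv_sum] at h
    rw [hz .src (.player b) rfl, hz .snk (.player b) rfl, hz (.player b) .src rfl,
      Finset.sum_eq_zero (fun b' (_ : b' ∈ univ) => hz (.player b') (.player b) rfl),
      Finset.sum_eq_zero (fun e (_ : e ∈ univ) => hz (.player b) (.trade e) rfl),
      Finset.sum_eq_zero (fun b' (_ : b' ∈ univ) => hz (.player b) (.player b') rfl)] at h
    linarith
  -- value formula for f
  have hval : flowValue PSV.src f = ∑ e, f .src (.trade e) := by
    unfold flowValue
    rw [psv_sum, psv_sum]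
    rw [hz .src .src rfl, hz .src .snk rfl, hz .snk .src rfl,
      Finset.sum_eq_zero (fun b (_ : b ∈ univ) => hz .src (.player b) rfl),
      Finset.sum_eq_zero (fun e (_ : e ∈ univ) => hz (.trade e) .src rfl),
      Finset.sum_eq_zero (fun b (_ : b ∈ univ) => hz (.player b) .src rfl)]
    ring
  -- the source edges are saturated
  have hsat : ∀ e, f .src (.trade e) = w e := by
    choose c hc using fun e => Finset.nonempty_iff_ne_empty.2 (hB e)
    have hg := psFlow_isFlow w hw B c hc
    have hle := hmax _ hg
    rw [psFlow_value, hval] at hle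
    have hco : ∀ e ∈ (univ : Finset E), f .src (.trade e) ≤ w e :=
      fun e _ => (hfc .src (.trade e) : _ ≤ w e)
    have heq : ∑ e, f .src (.trade e) = ∑ e, w e :=
      le_antisymm (Finset.sum_le_sum hco) hle
    intro e
    exact (Finset.sum_eq_sum_iff_of_le hco).1 heq e (mem_univ e)
  refine ⟨fun b => hf0 _ _, ?_, ?_⟩
  · intro S
    have step : ∀ e, B e ⊆ S → w e = ∑ b ∈ S, f (.trade e) (.player b) := by
      intro e heS
      rw [← hsat e, key_trade e]
      exact (Finset.sum_subset (subset_univ S)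
        (fun b _ hb => hz_player e b fun h => hb (heS h))).symm
    calc charFun w B S
        = ∑ e ∈ univ.filter (fun e => B e ⊆ S), ∑ b ∈ S, f (.trade e) (.player b) :=
          Finset.sum_congr rfl fun e he => step e (by simpa using he)
      _ = ∑ b ∈ S, ∑ e ∈ univ.filter (fun e => B e ⊆ S), f (.trade e) (.player b) :=
          Finset.sum_comm
      _ ≤ ∑ b ∈ S, ∑ e, f (.trade e) (.player b) :=
          Finset.sum_le_sum fun b _ =>
            Finset.sum_le_sum_of_subset_of_nonneg (filter_subset _ _) fun e _ _ => hf0 _ _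
      _ = ∑ b ∈ S, f (.player b) .snk := Finset.sum_congr rfl fun b _ => key_player b
  · have : ∑ b : N, f (.player b) .snk = ∑ e, w e := by
      calc ∑ b : N, f (.player b) .snk
          = ∑ b : N, ∑ e, f (.trade e) (.player b) :=
            Finset.sum_congr rfl fun b _ => (key_player b).symm
        _ = ∑ e, ∑ b, f (.trade e) (.player b) := Finset.sum_comm
        _ = ∑ e, w e := Finset.sum_congr rfl fun e _ => by rw [← key_trade e, hsat e]
    rw [this, charFun]
    simp
end

section
/- Key claim of the iteration lemma: Let H ⊆ N be a nonempty set of non-fixed players and r : N → ℝ prescribed payments for the fixed players in N \ H. Suppose f and f' are both maximum among all s-t flows g in the profit sharing graph that satisfy g(b, t) = r b for all b ∈ N \ H and that take a common value on all edges (b, t) with b ∈ H (i.e., g(b, t) = g(b', t) for all b, b' ∈ H). Then f(b, t) = f'(b, t) for every b ∈ N; in particular, every edge (b, t) with b ∈ H is fixed, so each iteration of the equal-maximum-flow algorithm fixes at least one edge. -/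
/-!
The value of any flow in the profit sharing graph is the total payment to the players, since
everything leaving the source must enter the sink through some player. For a flow in the
iteration class this is `∑_{b ∉ H} r b + |H| · c`, where `c` is the common payment to the
players of `H`. Two maximum flows of the class have the same value, and as `H` is nonempty
they must therefore have the same `c`; the payments outside `H` are prescribed anyway.
-/

open Finset

/-- The class of flows in the iteration: flows `g` of the profit sharing graph which pay the
prescribed amount `r b` to every fixed player `b ∉ H` and pay all non-fixed players in `H`
a common value. -/
def InIterClass {E N : Type} [Fintype E] [Fintype N] [DecidableEq E] [DecidableEq N]
    (w : E → ℝ) (B : E → Finset N) (H : Finset N) (r : N → ℝ)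
    (g : PSV E N → PSV E N → ℝ) : Prop :=
  IsFlow PSV.src PSV.snk (psCap w B) g ∧
    (∀ b ∉ H, g (PSV.player b) PSV.snk = r b) ∧
    ∀ b ∈ H, ∀ b' ∈ H, g (PSV.player b) PSV.snk = g (PSV.player b') PSV.snk

namespace IsFlow

variable {V : Type} [Fintype V] {s t : V} {u f : V → V → ℝ}

theorem eq_zero_of_cap_eq_zero (hf : IsFlow s t u f) {v w : V} (huvw : u v w = 0) :
    f v w = 0 :=
  le_antisymm (huvw ▸ hf.2.1 v w) (hf.1 v w)

theorem flowValue_eq_netInflow_sink (hf : IsFlow s t u f) (hst : s ≠ t) :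
    flowValue s f = (∑ v, f v t) - ∑ v, f t v := by
  have htotal : ∑ v, ((∑ x, f v x) - ∑ x, f x v) = 0 := by
    rw [Finset.sum_sub_distrib, Finset.sum_comm, sub_self]
  rw [Fintype.sum_eq_add s t hst
    (fun v hv => sub_eq_zero_of_eq (hf.2.2 v hv.1 hv.2).symm)] at htotal
  unfold flowValue
  linarith

end IsFlow

section ProfitSharing

variable {E N : Type} [Fintype E] [Fintype N] [DecidableEq N]
  {w : E → ℝ} {B : E → Finset N}

theorem flowValue_eq_sum_player_snk {g : PSV E N → PSV E N → ℝ}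
    (hg : IsFlow PSV.src PSV.snk (psCap w B) g) :
    flowValue PSV.src g = ∑ b, g (PSV.player b) PSV.snk := by
  have hout : ∑ v, g PSV.snk v = 0 :=
    Finset.sum_eq_zero fun v _ => hg.eq_zero_of_cap_eq_zero (by cases v <;> rfl)
  have hin : ∑ b, g (PSV.player b) PSV.snk = ∑ v, g v PSV.snk := by
    refine Fintype.sum_of_injective PSV.player (fun _ _ h => by injection h) _ _ ?_ fun _ => rfl
    intro v hv
    refine hg.eq_zero_of_cap_eq_zero ?_
    cases v with
    | player b => exact absurd ⟨b, rfl⟩ hv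
    | _ => rfl
  rw [hg.flowValue_eq_netInflow_sink (by simp), hout, sub_zero, hin]

theorem InIterClass.flowValue_eq [DecidableEq E] {H : Finset N} {r : N → ℝ}
    {g : PSV E N → PSV E N → ℝ} (hg : InIterClass w B H r g) {b₀ : N} (hb₀ : b₀ ∈ H) :
    flowValue PSV.src g = ∑ b ∈ Hᶜ, r b + #H * g (PSV.player b₀) PSV.snk := by
  obtain ⟨hflow, hfixed, hcommon⟩ := hg
  rw [flowValue_eq_sum_player_snk hflow, ← Finset.sum_add_sum_compl H, add_comm,
    Finset.sum_congr rfl fun b hb => hfixed b (Finset.mem_compl.mp hb),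
    Finset.sum_congr rfl fun b hb => hcommon b hb b₀ hb₀, Finset.sum_const, nsmul_eq_mul]

theorem InIterClass.snk_eq_of_flowValue_eq [DecidableEq E] {H : Finset N} {r : N → ℝ}
    (hH : H.Nonempty) {g g' : PSV E N → PSV E N → ℝ}
    (hg : InIterClass w B H r g) (hg' : InIterClass w B H r g')
    (hval : flowValue PSV.src g = flowValue PSV.src g') (b : N) :
    g (PSV.player b) PSV.snk = g' (PSV.player b) PSV.snk := by
  obtain ⟨b₀, hb₀⟩ := hH
  have hcard : (#H : ℝ) ≠ 0 := Nat.cast_ne_zero.mpr (Finset.card_ne_zero_of_mem hb₀)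
  have hb₀_eq : g (PSV.player b₀) PSV.snk = g' (PSV.player b₀) PSV.snk := by
    rw [hg.flowValue_eq hb₀, hg'.flowValue_eq hb₀] at hval
    exact mul_left_cancel₀ hcard (add_left_cancel hval)
  by_cases hb : b ∈ H
  · rw [hg.2.2 b hb b₀ hb₀, hg'.2.2 b hb b₀ hb₀, hb₀_eq]
  · rw [hg.2.1 b hb, hg'.2.1 b hb]

end ProfitSharing

theorem iteration_fixes_edges_general {E N : Type} [Fintype E] [Fintype N]
    [DecidableEq E] [DecidableEq N]
    (w : E → ℝ) (B : E → Finset N)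
    (H : Finset N) (hH : H.Nonempty) (r : N → ℝ)
    (f f' : PSV E N → PSV E N → ℝ)
    (hf : InIterClass w B H r f)
    (hfmax : ∀ g, InIterClass w B H r g → flowValue PSV.src g ≤ flowValue PSV.src f)
    (hf' : InIterClass w B H r f')
    (hf'max : ∀ g, InIterClass w B H r g → flowValue PSV.src g ≤ flowValue PSV.src f') :
    ∀ b : N, f (PSV.player b) PSV.snk = f' (PSV.player b) PSV.snk :=
  hf.snk_eq_of_flowValue_eq hH hf' (le_antisymm (hf'max f hf) (hfmax f' hf'))

/-- Key claim of the iteration lemma: any two flows that are maximum among the flows in the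
iteration class pay every player the same amount; in particular every edge `(b, snk)` with
`b ∈ H` is fixed. -/
theorem iteration_fixes_edges {E N : Type} [Fintype E] [Fintype N]
    [DecidableEq E] [DecidableEq N]
    (w : E → ℝ) (hw : ∀ e, 0 ≤ w e) (B : E → Finset N) (hB : ∀ e, B e ≠ ∅)
    (H : Finset N) (hH : H.Nonempty) (r : N → ℝ)
    (f f' : PSV E N → PSV E N → ℝ)
    (hf : InIterClass w B H r f)
    (hfmax : ∀ g, InIterClass w B H r g → flowValue PSV.src g ≤ flowValue PSV.src f)
    (hf' : InIterClass w B H r f')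
    (hf'max : ∀ g, InIterClass w B H r g → flowValue PSV.src g ≤ flowValue PSV.src f') :
    ∀ b : N, f (PSV.player b) PSV.snk = f' (PSV.player b) PSV.snk :=
  iteration_fixes_edges_general w B H hH r f f' hf hfmax hf' hf'max
end
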